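/- For 0 < q < 1 and all t ∈ ℂ, the q-exponential series E_q(t) = ∑_{n≥0} (-1)^n q^{n(n-1)/2} t^n/(q;q)_n converges and equals the infinite product (t;q)_∞ = ∏_{k≥0}(1 - t q^k). -/

import Mathlib

/-- The complex q-Pochhammer symbol `(a;q)_n = ∏_{k=0}^{n-1} (1 - a q^k)`. -/
noncomputable def qPochC (q a : ℂ) (n : ℕ) : ℂ := ∏ k ∈ Finset.range n, (1 - a * q ^ k)

/-- `(a;q)_∞ = ∏_{k=0}^{∞} (1 - a q^k)` over `ℂ`. -/
noncomputable def qPochInfC (q a : ℂ) : ℂ := ∏' k : ℕ, (1 - a * q ^ k)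

/-!
Comparing coefficients gives the functional equation `E_q(t) = (1 - t) E_q(qt)`, hence
`E_q(t) = (t;q)_N E_q(q^N t)` for every `N`, for any complex `q` with `‖q‖ < 1`. As `N → ∞`,
`(t;q)_N → (t;q)_∞`, while `q^N t → 0` and dominated convergence gives `E_q(q^N t) → E_q(0) = 1`.
-/

open Filter Topology

section

variable {q : ℂ}

lemma qPochC_succ (q a : ℂ) (n : ℕ) : qPochC q a (n + 1) = qPochC q a n * (1 - a * q ^ n) :=
  Finset.prod_range_succ _ n

lemma one_sub_norm_le_norm_one_sub_pow_succ (hq : ‖q‖ < 1) (n : ℕ) :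
    1 - ‖q‖ ≤ ‖1 - q ^ (n + 1)‖ :=
  calc 1 - ‖q‖ ≤ 1 - ‖q‖ ^ (n + 1) := by
        gcongr; exact pow_le_of_le_one (norm_nonneg q) hq.le n.succ_ne_zero
    _ = ‖(1 : ℂ)‖ - ‖q ^ (n + 1)‖ := by rw [norm_one, norm_pow]
    _ ≤ ‖1 - q ^ (n + 1)‖ := norm_sub_norm_le _ _

lemma one_sub_pow_succ_ne_zero (hq : ‖q‖ < 1) (n : ℕ) : 1 - q ^ (n + 1) ≠ 0 :=
  norm_pos_iff.mp <| (sub_pos.mpr hq).trans_le (one_sub_norm_le_norm_one_sub_pow_succ hq n)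

lemma qPochC_self_ne_zero (hq : ‖q‖ < 1) (n : ℕ) : qPochC q q n ≠ 0 :=
  Finset.prod_ne_zero_iff.mpr fun k _ => by
    rw [← pow_succ']; exact one_sub_pow_succ_ne_zero hq k

noncomputable def qExpCoeff (q : ℂ) (n : ℕ) : ℂ := (-1) ^ n * q ^ (n * (n - 1) / 2) / qPochC q q n

lemma qExpCoeff_zero : qExpCoeff q 0 = 1 := by
  simp [qExpCoeff, qPochC]

lemma qExpCoeff_succ_mul (hq : ‖q‖ < 1) (n : ℕ) :
    qExpCoeff q (n + 1) * (1 - q ^ (n + 1)) = -q ^ n * qExpCoeff q n := by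
  have hn := qPochC_self_ne_zero hq n
  have hn' := one_sub_pow_succ_ne_zero hq n
  rw [qExpCoeff, qExpCoeff, qPochC_succ, Nat.triangle_succ, ← pow_succ']
  field_simp
  ring

lemma summable_norm_qExpCoeff_mul_pow (hq : ‖q‖ < 1) (t : ℂ) :
    Summable fun n => ‖qExpCoeff q n * t ^ n‖ := by
  have hq' : 0 < 1 - ‖q‖ := sub_pos.mpr hq
  have hratio : Tendsto (fun n => ‖q‖ ^ n * ‖t‖ / (1 - ‖q‖)) atTop (𝓝 0) := by
    simpa using ((tendsto_pow_atTop_nhds_zero_of_lt_one (norm_nonneg q) hq).mul_const ‖t‖).div_const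
      (1 - ‖q‖)
  refine summable_of_ratio_norm_eventually_le one_half_lt_one ?_
  filter_upwards [hratio.eventually_le_const one_half_pos] with n hn
  have hrec : ‖qExpCoeff q (n + 1)‖ * ‖1 - q ^ (n + 1)‖ = ‖q‖ ^ n * ‖qExpCoeff q n‖ := by
    rw [← norm_mul, qExpCoeff_succ_mul hq, norm_mul, norm_neg, norm_pow]
  have hcoeff : ‖qExpCoeff q (n + 1)‖ * (1 - ‖q‖) ≤ ‖q‖ ^ n * ‖qExpCoeff q n‖ :=
    hrec ▸ mul_le_mul_of_nonneg_left (one_sub_norm_le_norm_one_sub_pow_succ hq n) (norm_nonneg _)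
  simp only [norm_norm, norm_mul, norm_pow, pow_succ]
  calc ‖qExpCoeff q (n + 1)‖ * (‖t‖ ^ n * ‖t‖)
      ≤ ‖q‖ ^ n * ‖qExpCoeff q n‖ / (1 - ‖q‖) * (‖t‖ ^ n * ‖t‖) := by
        gcongr; rwa [le_div_iff₀ hq']
    _ = ‖q‖ ^ n * ‖t‖ / (1 - ‖q‖) * (‖qExpCoeff q n‖ * ‖t‖ ^ n) := by ring
    _ ≤ 1 / 2 * (‖qExpCoeff q n‖ * ‖t‖ ^ n) := by gcongr

noncomputable def qExp (q t : ℂ) : ℂ := ∑' n, qExpCoeff q n * t ^ n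

lemma hasSum_qExp (hq : ‖q‖ < 1) (t : ℂ) : HasSum (fun n => qExpCoeff q n * t ^ n) (qExp q t) :=
  (summable_norm_qExpCoeff_mul_pow hq t).of_norm.hasSum

lemma qExp_eq_one_sub_mul_qExp (hq : ‖q‖ < 1) (t : ℂ) :
    qExp q t = (1 - t) * qExp q (q * t) := by
  set g : ℕ → ℂ := fun n => qExpCoeff q n * (1 - q ^ n) * t ^ n
  have hdiff : HasSum g (qExp q t - qExp q (q * t)) :=
    ((hasSum_qExp hq t).sub (hasSum_qExp hq (q * t))).congr_fun fun n => by simp only [g]; ring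
  have hshift : HasSum g (-t * qExp q (q * t)) := by
    rw [← hasSum_nat_add_iff' 1]
    simp only [g, Finset.sum_range_one, pow_zero, sub_self, mul_zero, zero_mul, sub_zero]
    refine ((hasSum_qExp hq (q * t)).mul_left (-t)).congr_fun fun n => ?_
    rw [qExpCoeff_succ_mul hq]
    ring
  linear_combination hdiff.unique hshift

lemma qExp_eq_qPochC_mul (hq : ‖q‖ < 1) (t : ℂ) (N : ℕ) :
    qExp q t = qPochC q t N * qExp q (q ^ N * t) := by
  induction N with
  | zero => simp [qPochC]
  | succ n ih =>
    rw [ih, qExp_eq_one_sub_mul_qExp hq, qPochC_succ]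
    ring_nf

lemma tendsto_qExp_pow_mul (hq : ‖q‖ < 1) (t : ℂ) :
    Tendsto (fun N => qExp q (q ^ N * t)) atTop (𝓝 1) := by
  have hsum : ∑' n, qExpCoeff q n * (0 * t) ^ n = 1 := by
    rw [tsum_eq_single 0 fun n hn => by simp [hn]]
    simp [qExpCoeff_zero]
  rw [← hsum]
  refine tendsto_tsum_of_dominated_convergence (summable_norm_qExpCoeff_mul_pow hq t)
    (fun n => ?_) (Eventually.of_forall fun N n => ?_)
  · exact (((tendsto_pow_atTop_nhds_zero_of_norm_lt_one hq).mul_const t).pow n).const_mul _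
  · rw [mul_pow, ← mul_assoc, norm_mul, norm_mul _ (t ^ n), norm_mul, norm_pow, norm_pow]
    have hqN : (‖q‖ ^ N) ^ n ≤ 1 := pow_le_one₀ (by positivity) (pow_le_one₀ (norm_nonneg q) hq.le)
    gcongr
    exact mul_le_of_le_one_right (norm_nonneg _) hqN

lemma hasProd_qPochInfC (hq : ‖q‖ < 1) (t : ℂ) :
    HasProd (fun k => 1 - t * q ^ k) (qPochInfC q t) := by
  have hsum : Summable fun k => -(t * q ^ k) :=
    ((summable_geometric_of_norm_lt_one hq).mul_left t).neg
  simpa [qPochInfC, sub_eq_add_neg] using (Complex.multipliable_one_add_of_summable hsum).hasProd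

lemma qExp_eq_qPochInfC (hq : ‖q‖ < 1) (t : ℂ) : qExp q t = qPochInfC q t := by
  have hlim := (hasProd_qPochInfC hq t).tendsto_prod_nat.mul (tendsto_qExp_pow_mul hq t)
  rw [mul_one] at hlim
  exact tendsto_nhds_unique (tendsto_const_nhds.congr (qExp_eq_qPochC_mul hq t)) hlim

end

/-- For `0 < q < 1` and every `t ∈ ℂ`, the series
`E_q(t) = ∑_{n≥0} (-1)^n q^{n(n-1)/2} t^n/(q;q)_n` converges and equals `(t;q)_∞`. -/
theorem qExpE_eq_qPochInf (q : ℝ) (hq0 : 0 < q) (hq1 : q < 1) (t : ℂ) :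
    HasSum (fun n : ℕ => (-1) ^ n * (q : ℂ) ^ (n * (n - 1) / 2) * t ^ n / qPochC q q n)
      (qPochInfC q t) := by
  have hq : ‖(q : ℂ)‖ < 1 := by rwa [Complex.norm_real, Real.norm_of_nonneg hq0.le]
  rw [← qExp_eq_qPochInfC hq]
  refine (hasSum_qExp hq t).congr_fun fun n => ?_
  rw [qExpCoeff]
  ring
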